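/- Let m and n be nonnegative integers. There exists an isomorphism of edge-labeled directed graphs between A(m) and A(n) if and only if there exists a nonnegative integer t such that m = 2^t·n + 2^t − 1 or n = 2^t·m + 2^t − 1. -/

import Mathlib

/-- The value of a word over the digits `{0,1,2}`, read as a (hyper)binary expansion:
`wordVal (x₀ … x_k) = Σ x_i · 2^(k-i)`. -/
def wordVal : List ℕ → ℕ
  | [] => 0
  | d :: w => d * 2 ^ w.length + wordVal w

/-- `Hyp n` is the set of hyperbinary expansions of `n`: words over `{0,1,2}` with
nonzero leading digit whose value is `n` (the empty word is the unique expansion of `0`). -/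
def Hyp (n : ℕ) : Set (List ℕ) :=
  {w | (∀ d ∈ w, d ≤ 2) ∧ w.head? ≠ some 0 ∧ wordVal w = n}

/-- Single-step reduction of type `→` : `(x02y, x10y)` or `(2y, 10y)`. -/
def StepArrow (a b : List ℕ) : Prop :=
  (∃ x y : List ℕ, a = x ++ 0 :: 2 :: y ∧ b = x ++ 1 :: 0 :: y) ∨
    (∃ y : List ℕ, a = 2 :: y ∧ b = 1 :: 0 :: y)

/-- Single-step reduction of type `↠` : `(x12y, x20y)`. -/
def StepDouble (a b : List ℕ) : Prop :=
  ∃ x y : List ℕ, a = x ++ 1 :: 2 :: y ∧ b = x ++ 2 :: 0 :: y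

/-- A single-step reduction (of either type). -/
def Step (a b : List ℕ) : Prop := StepArrow a b ∨ StepDouble a b

/-- `bFun n` is the number of hyperbinary expansions of `n`. -/
noncomputable def bFun (n : ℕ) : ℕ := (Hyp n).ncard

/-- The set of arcs of the graph `A(n)`: labeled single-step reductions between
hyperbinary expansions of `n`. -/
def arcs (n : ℕ) : Set (List ℕ × List ℕ) :=
  {p | p.1 ∈ Hyp n ∧ p.2 ∈ Hyp n ∧ Step p.1 p.2}

/-- `aFun n` is the number of arcs of `A(n)`. -/
noncomputable def aFun (n : ℕ) : ℕ := (arcs n).ncard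

/-- The cyclomatic number `v(n) = a(n) - b(n) + 1` of the connected graph `A(n)`. -/
noncomputable def vFun (n : ℕ) : ℕ := aFun n + 1 - bFun n

section HB

lemma hb_wordVal_append (u v : List ℕ) :
    wordVal (u ++ v) = wordVal u * 2 ^ v.length + wordVal v := by
  induction u with
  | nil => simp [wordVal]
  | cons d u ih =>
      simp only [List.cons_append, wordVal, ih, List.append_eq, List.length_append, pow_add]
      ring

lemma hb_wordVal_concat (u : List ℕ) (d : ℕ) :
    wordVal (u ++ [d]) = 2 * wordVal u + d := by
  simp [hb_wordVal_append, wordVal]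
  ring

lemma hb_mem_hyp {w : List ℕ} {n : ℕ} :
    w ∈ Hyp n ↔ (∀ d ∈ w, d ≤ 2) ∧ w.head? ≠ some 0 ∧ wordVal w = n := Iff.rfl

lemma hb_nil_mem : ([] : List ℕ) ∈ Hyp 0 := by
  simp [hb_mem_hyp, wordVal]

lemma hb_val_ne_zero {w : List ℕ} {n : ℕ} (hw : w ∈ Hyp n) (h : w ≠ []) : n ≠ 0 := by
  obtain ⟨hd, hh, hv⟩ := hw
  cases w with
  | nil => exact absurd rfl h
  | cons d r =>
      have hd0 : d ≠ 0 := by simpa using hh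
      have : 0 < d * 2 ^ r.length := by positivity
      simp only [wordVal] at hv
      omega

lemma hb_mem_zero {w : List ℕ} (hw : w ∈ Hyp 0) : w = [] := by
  by_contra h
  exact hb_val_ne_zero hw h rfl

lemma hb_append_mem {w : List ℕ} {k d : ℕ} (hw : w ∈ Hyp k) (hd : d ≤ 2)
    (h0 : w ≠ [] ∨ d ≠ 0) : w ++ [d] ∈ Hyp (2 * k + d) := by
  obtain ⟨hdig, hhead, hval⟩ := hw
  refine ⟨?_, ?_, ?_⟩
  · intro e he
    rcases List.mem_append.1 he with h | h
    · exact hdig e h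
    · simp at h; omega
  · cases w with
    | nil =>
        rcases h0 with h | h
        · exact absurd rfl h
        · simpa using h
    | cons a t => simpa using hhead
  · rw [hb_wordVal_concat, hval]

lemma hb_unappend {u : List ℕ} {d n : ℕ} (hw : u ++ [d] ∈ Hyp n) :
    d ≤ 2 ∧ n = 2 * wordVal u + d ∧ u ∈ Hyp (wordVal u) := by
  obtain ⟨hdig, hhead, hval⟩ := hw
  refine ⟨hdig d (by simp), by rw [← hval, hb_wordVal_concat], ?_, ?_, rfl⟩
  · intro e he; exact hdig e (by simp [he])
  · cases u with
    | nil => simp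
    | cons a t => simpa using hhead

lemma hb_concat_cases (l : List ℕ) : l = [] ∨ ∃ u d, l = u ++ [d] := by
  induction l using List.reverseRecOn with
  | nil => left; rfl
  | append_singleton u d _ => right; exact ⟨u, d, rfl⟩

lemma hb_hyp_odd (k : ℕ) : Hyp (2 * k + 1) = (fun w => w ++ [1]) '' Hyp k := by
  ext w
  constructor
  · intro hw
    rcases hb_concat_cases w with rfl | ⟨u, d, rfl⟩
    · have hv := hw.2.2
      simp [wordVal] at hv
    · obtain ⟨hd2, hval, hu⟩ := hb_unappend hw
      have hd1 : d = 1 := by omega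
      subst hd1
      have hk : wordVal u = k := by omega
      exact ⟨u, hk ▸ hu, rfl⟩
  · rintro ⟨u, hu, rfl⟩
    exact hb_append_mem hu (by norm_num) (Or.inr one_ne_zero)

end HB
lemma hb_hyp_even (k : ℕ) (hk : k ≠ 0) :
    Hyp (2 * k) = ((fun w => w ++ [0]) '' Hyp k) ∪ ((fun w => w ++ [2]) '' Hyp (k - 1)) := by
  ext w
  constructor
  · intro hw
    rcases hb_concat_cases w with rfl | ⟨u, d, rfl⟩
    · have hv := hw.2.2
      simp [wordVal] at hv
      omega
    · obtain ⟨hd2, hval, hu⟩ := hb_unappend hw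
      have : d = 0 ∨ d = 2 := by omega
      rcases this with rfl | rfl
      · left
        have hk' : wordVal u = k := by omega
        exact ⟨u, hk' ▸ hu, rfl⟩
      · right
        have hk' : wordVal u = k - 1 := by omega
        exact ⟨u, hk' ▸ hu, rfl⟩
  · rintro (⟨u, hu, rfl⟩ | ⟨u, hu, rfl⟩)
    · have hne : u ≠ [] := by
        intro h; subst h
        have := hu.2.2
        simp [wordVal] at this
        exact hk this.symm
      have := hb_append_mem (d := 0) hu (by norm_num) (Or.inl hne)
      simpa using this
    · have := hb_append_mem (d := 2) hu (by norm_num) (Or.inr (by norm_num))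
      have h2 : 2 * (k - 1) + 2 = 2 * k := by omega
      rwa [h2] at this

lemma hb_length_le {w : List ℕ} {n : ℕ} (hw : w ∈ Hyp n) : w.length ≤ n := by
  cases w with
  | nil => simp
  | cons d r =>
      obtain ⟨hdig, hhead, hval⟩ := hw
      have hd : d ≠ 0 := by simpa using hhead
      have h1 : 2 ^ r.length ≤ wordVal (d :: r) := by
        have hle : 1 * 2 ^ r.length ≤ d * 2 ^ r.length :=
          Nat.mul_le_mul_right _ (by omega)
        simp only [wordVal]
        omega
      have h2 : r.length < 2 ^ r.length := Nat.lt_two_pow_self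
      simp only [List.length_cons]
      omega

lemma hb_finite (n : ℕ) : (Hyp n).Finite := by
  have hmap : ∀ u : List ℕ, (∀ d ∈ u, d ≤ 2) →
      (u.map (fun d => (⟨min d 2, by omega⟩ : Fin 3))).map Fin.val = u := by
    intro u hu
    induction u with
    | nil => simp
    | cons a t ih =>
        simp only [List.map_cons, List.cons.injEq]
        constructor
        · have : a ≤ 2 := hu a (by simp)
          simp [Nat.min_eq_left this]
        · exact ih (fun d hd => hu d (by simp [hd]))
  have h : Hyp n ⊆ (fun l : List (Fin 3) => l.map (Fin.val)) '' {l | l.length ≤ n} := by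
    intro w hw
    refine ⟨w.map (fun d => (⟨min d 2, by omega⟩ : Fin 3)), ?_, hmap w hw.1⟩
    simpa using hb_length_le hw
  exact Set.Finite.subset (Set.Finite.image _ (List.finite_length_le (Fin 3) n)) h

noncomputable def hbF (n : ℕ) : Finset (List ℕ) := (hb_finite n).toFinset

lemma hb_mem_F {w : List ℕ} {n : ℕ} : w ∈ hbF n ↔ w ∈ Hyp n := Set.Finite.mem_toFinset _

noncomputable def hbS (n : ℕ) : ℕ := ∑ w ∈ hbF n, 2 ^ (w.count 1)

lemma hb_app_inj (d : ℕ) : Function.Injective (fun w : List ℕ => w ++ [d]) :=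
  List.append_left_injective [d]

lemma hbS_odd (k : ℕ) : hbS (2 * k + 1) = 2 * hbS k := by
  have hF : hbF (2 * k + 1) = (hbF k).image (fun w => w ++ [1]) := by
    ext w
    simp only [hb_mem_F, Finset.mem_image, hb_hyp_odd k]
    constructor <;> (rintro ⟨u, hu, rfl⟩; exact ⟨u, hu, rfl⟩)

  rw [hbS, hF, Finset.sum_image (fun a _ b _ h => hb_app_inj 1 h)]
  rw [hbS, Finset.mul_sum]
  apply Finset.sum_congr rfl
  intro w _
  have : (w ++ [1]).count 1 = w.count 1 + 1 := by
    simp [List.count_append]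
  rw [this, pow_succ]
  ring

lemma hbS_even (k : ℕ) (hk : k ≠ 0) : hbS (2 * k) = hbS k + hbS (k - 1) := by
  have hF : hbF (2 * k) =
      (hbF k).image (fun w => w ++ [0]) ∪ (hbF (k - 1)).image (fun w => w ++ [2]) := by
    ext w
    simp only [hb_mem_F, Finset.mem_union, Finset.mem_image, hb_hyp_even k hk]
    constructor <;>
      (rintro (⟨u, hu, rfl⟩ | ⟨u, hu, rfl⟩)
       · exact Or.inl ⟨u, hu, rfl⟩
       · exact Or.inr ⟨u, hu, rfl⟩)
  have hdisj : Disjoint ((hbF k).image (fun w => w ++ [0]))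
      ((hbF (k - 1)).image (fun w => w ++ [2])) := by
    rw [Finset.disjoint_left]
    intro a ha hb
    obtain ⟨u, _, rfl⟩ := Finset.mem_image.1 ha
    obtain ⟨v, _, hv⟩ := Finset.mem_image.1 hb
    have := (List.append_inj' hv.symm rfl).2
    simp at this
  rw [hbS, hF, Finset.sum_union hdisj,
    Finset.sum_image (fun a _ b _ h => hb_app_inj 0 h),
    Finset.sum_image (fun a _ b _ h => hb_app_inj 2 h)]
  congr 1
  · apply Finset.sum_congr rfl
    intro w _
    congr 1
    simp [List.count_append]
  · apply Finset.sum_congr rfl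
    intro w _
    congr 1
    simp [List.count_append]

lemma hb_hyp_zero : Hyp 0 = {([] : List ℕ)} := by
  ext w
  constructor
  · intro hw; exact hb_mem_zero hw
  · rintro rfl; exact hb_nil_mem

lemma hbS_zero : hbS 0 = 1 := by
  have : hbF 0 = {([] : List ℕ)} := by
    ext w
    simp [hb_mem_F, hb_hyp_zero]
  rw [hbS, this]
  simp

lemma hbS_eq (n : ℕ) : hbS n = n + 1 := by
  induction n using Nat.strong_induction_on with
  | _ n ih =>
      rcases Nat.even_or_odd n with he | ho
      · obtain ⟨k, hk⟩ := he
        have hn : n = 2 * k := by omega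
        subst hn
        rcases Nat.eq_zero_or_pos k with rfl | hkpos
        · simpa using hbS_zero
        · have h1 := ih k (by omega)
          have h2 := ih (k - 1) (by omega)
          rw [hbS_even k (by omega), h1, h2]
          omega
      · obtain ⟨k, hk⟩ := ho
        subst hk
        have h1 := ih k (by omega)
        rw [hbS_odd, h1]
        omega
lemma hb_val_cons2 (a b : ℕ) (y : List ℕ) :
    wordVal (a :: b :: y) = a * 2 ^ (y.length + 1) + b * 2 ^ y.length + wordVal y := by
  simp [wordVal]
  ring

lemma hb_val_02 (y : List ℕ) : wordVal (0 :: 2 :: y) = wordVal (1 :: 0 :: y) := by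
  simp [hb_val_cons2, pow_succ]
  ring

lemma hb_val_2 (y : List ℕ) : wordVal (2 :: y) = wordVal (1 :: 0 :: y) := by
  simp [hb_val_cons2, wordVal, pow_succ]
  ring

lemma hb_val_12 (y : List ℕ) : wordVal (1 :: 2 :: y) = wordVal (2 :: 0 :: y) := by
  simp [hb_val_cons2, pow_succ]
  ring

lemma hb_step_mem {n : ℕ} {a b : List ℕ} (ha : a ∈ Hyp n) (h : Step a b) : b ∈ Hyp n := by
  obtain ⟨hdig, hhead, hval⟩ := ha
  rcases h with (⟨x, y, rfl, rfl⟩ | ⟨y, rfl, rfl⟩) | ⟨x, y, rfl, rfl⟩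
  · refine ⟨?_, ?_, ?_⟩
    · intro e he
      rcases List.mem_append.1 he with h | h
      · exact hdig e (by simp [h])
      · simp only [List.mem_cons] at h
        rcases h with rfl | rfl | h
        · omega
        · omega
        · exact hdig e (by simp [List.mem_cons, h])
    · cases x with
      | nil => simp
      | cons a t => simpa using hhead
    · rw [← hval, hb_wordVal_append, hb_wordVal_append, ← hb_val_02]
      simp [List.length_cons]
  · refine ⟨?_, by simp, ?_⟩
    · intro e he
      simp only [List.mem_cons] at he
      rcases he with rfl | rfl | h
      · omega
      · omega
      · exact hdig e (by simp [List.mem_cons, h])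
    · rw [← hval, ← hb_val_2]
  · refine ⟨?_, ?_, ?_⟩
    · intro e he
      rcases List.mem_append.1 he with h | h
      · exact hdig e (by simp [h])
      · simp only [List.mem_cons] at h
        rcases h with rfl | rfl | h
        · omega
        · omega
        · exact hdig e (by simp [List.mem_cons, h])
    · cases x with
      | nil => simp
      | cons a t => simpa using hhead
    · rw [← hval, hb_wordVal_append, hb_wordVal_append, hb_val_12]
      simp [List.length_cons]

lemma hb_count_arrow {a b : List ℕ} (h : StepArrow a b) :
    b.count 1 = a.count 1 + 1 ∧ a.sum = b.sum + 1 := by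
  rcases h with ⟨x, y, rfl, rfl⟩ | ⟨y, rfl, rfl⟩
  · constructor
    · simp [List.count_append, List.count_cons]
      try omega
    · simp [List.sum_append]
      try omega
  · constructor
    · simp [List.count_cons]
      try omega
    · simp
      try omega

lemma hb_count_double {a b : List ℕ} (h : StepDouble a b) :
    a.count 1 = b.count 1 + 1 ∧ a.sum = b.sum + 1 := by
  obtain ⟨x, y, rfl, rfl⟩ := h
  constructor
  · simp [List.count_append, List.count_cons]
    try omega
  · simp [List.sum_append]
    try omega

lemma hb_exists_step : ∀ (w : List ℕ), (∀ d ∈ w, d ≤ 2) → 2 ∈ w → ∃ b, Step w b := by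
  intro w
  induction w with
  | nil => simp
  | cons d r ih =>
      intro hd h2
      by_cases hdd : d = 2
      · subst hdd
        exact ⟨1 :: 0 :: r, Or.inl (Or.inr ⟨r, rfl, rfl⟩)⟩
      · have h2r : 2 ∈ r := by
          rcases List.mem_cons.1 h2 with h | h
          · exact absurd h.symm hdd
          · exact h
        have hd2 : d ≤ 2 := hd d (by simp)
        cases r with
        | nil => simp at h2r
        | cons e s =>
            by_cases hee : e = 2
            · subst hee
              have : d = 0 ∨ d = 1 := by omega
              rcases this with rfl | rfl
              · exact ⟨1 :: 0 :: s, Or.inl (Or.inl ⟨[], s, rfl, rfl⟩)⟩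
              · exact ⟨2 :: 0 :: s, Or.inr ⟨[], s, rfl, rfl⟩⟩
            · obtain ⟨b, hb⟩ := ih (fun e' he' => hd e' (by simp [List.mem_cons] at he' ⊢; tauto)) h2r
              rcases hb with (⟨x, y, hx1, hx2⟩ | ⟨y, hy1, hy2⟩) | ⟨x, y, hx1, hx2⟩
              · exact ⟨d :: b, Or.inl (Or.inl ⟨d :: x, y, by simp [hx1], by simp [hx2]⟩)⟩
              · simp only [List.cons.injEq] at hy1
                exact absurd hy1.1 hee
              · exact ⟨d :: b, Or.inr ⟨d :: x, y, by simp [hx1], by simp [hx2]⟩⟩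

lemma hb_two_free_unique : ∀ n : ℕ, ∀ u v : List ℕ, u ∈ Hyp n → v ∈ Hyp n →
    2 ∉ u → 2 ∉ v → u = v := by
  intro n
  induction n using Nat.strong_induction_on with
  | _ n ih =>
      intro u v hu hv h2u h2v
      rcases Nat.eq_zero_or_pos n with rfl | hn
      · rw [hb_mem_zero hu, hb_mem_zero hv]
      · have hune : u ≠ [] := by
          intro h; subst h
          have := hu.2.2; simp [wordVal] at this; omega
        have hvne : v ≠ [] := by
          intro h; subst h
          have := hv.2.2; simp [wordVal] at this; omega
        rcases hb_concat_cases u with rfl | ⟨u', du, rfl⟩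
        · exact absurd rfl hune
        rcases hb_concat_cases v with rfl | ⟨v', dv, rfl⟩
        · exact absurd rfl hvne
        obtain ⟨hdu2, hnu, hu'⟩ := hb_unappend hu
        obtain ⟨hdv2, hnv, hv'⟩ := hb_unappend hv
        have hdu : du ≠ 2 := fun h => h2u (by simp [h])
        have hdv : dv ≠ 2 := fun h => h2v (by simp [h])
        have hdd : du = dv := by omega
        subst hdd
        have hval : wordVal u' = wordVal v' := by omega
        have hlt : wordVal u' < n := by omega
        have := ih (wordVal u') hlt u' v' hu' (hval ▸ hv')
          (fun h => h2u (by simp [h])) (fun h => h2v (by simp [h]))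
        rw [this]

lemma hb_exists_two_free (n : ℕ) : ∃ w, w ∈ Hyp n ∧ 2 ∉ w := by
  induction n using Nat.strong_induction_on with
  | _ n ih =>
      rcases Nat.eq_zero_or_pos n with rfl | hn
      · exact ⟨[], hb_nil_mem, by simp⟩
      · rcases Nat.even_or_odd n with he | ho
        · obtain ⟨k, hk⟩ := he
          have hn2 : n = 2 * k := by omega
          obtain ⟨w, hw, h2w⟩ := ih k (by omega)
          have hwne : w ≠ [] := by
            intro h; subst h
            have := hw.2.2; simp [wordVal] at this; omega
          refine ⟨w ++ [0], ?_, ?_⟩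
          · have := hb_append_mem (d := 0) hw (by norm_num) (Or.inl hwne)
            simpa [hn2] using this
          · simp [List.mem_append]
            exact h2w
        · obtain ⟨k, hk⟩ := ho
          obtain ⟨w, hw, h2w⟩ := ih k (by omega)
          refine ⟨w ++ [1], ?_, ?_⟩
          · have := hb_append_mem (d := 1) hw (by norm_num) (Or.inr one_ne_zero)
            rwa [← hk] at this
          · simp [List.mem_append]
            exact h2w
lemma hb_offset {m n : ℕ} (φ : Hyp m ≃ Hyp n)
    (hφ : ∀ x y : Hyp m,
      (StepArrow x.1 y.1 ↔ StepArrow (φ x).1 (φ y).1) ∧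
      (StepDouble x.1 y.1 ↔ StepDouble (φ x).1 (φ y).1)) :
    ∃ c : ℤ, ∀ x : Hyp m, ((φ x).1.count 1 : ℤ) = (x.1.count 1 : ℤ) + c := by
  obtain ⟨β, hβ, hβ2⟩ := hb_exists_two_free m
  set B : Hyp m := ⟨β, hβ⟩ with hB
  refine ⟨((φ B).1.count 1 : ℤ) - (β.count 1 : ℤ), ?_⟩
  suffices h : ∀ s : ℕ, ∀ x : Hyp m, x.1.sum = s →
      ((φ x).1.count 1 : ℤ) - (x.1.count 1 : ℤ)
        = ((φ B).1.count 1 : ℤ) - (β.count 1 : ℤ) by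
    intro x
    have := h x.1.sum x rfl
    omega
  intro s
  induction s using Nat.strong_induction_on with
  | _ s ih =>
      intro x hx
      by_cases hstep : ∃ b, Step x.1 b
      · obtain ⟨b, hb⟩ := hstep
        have hbm : b ∈ Hyp m := hb_step_mem x.2 hb
        have hsum : x.1.sum = b.sum + 1 := by
          rcases hb with h | h
          · exact (hb_count_arrow h).2
          · exact (hb_count_double h).2
        have key := ih b.sum (by omega) ⟨b, hbm⟩ rfl
        rcases hb with harr | hdbl
        · have h1 := (hb_count_arrow harr).1
          have h2 : StepArrow (φ x).1 (φ ⟨b, hbm⟩).1 := ((hφ x ⟨b, hbm⟩).1).mp harr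
          have h3 := (hb_count_arrow h2).1
          simp only [Subtype.coe_mk] at key h1 h3 ⊢
          omega
        · have h1 := (hb_count_double hdbl).1
          have h2 : StepDouble (φ x).1 (φ ⟨b, hbm⟩).1 := ((hφ x ⟨b, hbm⟩).2).mp hdbl
          have h3 := (hb_count_double h2).1
          simp only [Subtype.coe_mk] at key h1 h3 ⊢
          omega
      · have h2 : (2 : ℕ) ∉ x.1 := fun h => hstep (hb_exists_step _ x.2.1 h)
        have hxβ : x.1 = β := hb_two_free_unique m _ _ x.2 hβ h2 hβ2
        have hxB : x = B := Subtype.ext hxβ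
        rw [hxB]

lemma hb_sum_subtype (k : ℕ) [Fintype (Hyp k)] :
    ∑ x : Hyp k, 2 ^ (x.1.count 1) = k + 1 := by
  rw [← hbS_eq k, hbS]
  apply Finset.sum_bij (fun (x : Hyp k) (_ : x ∈ Finset.univ) => x.1)
  · intro a _
    exact hb_mem_F.mpr a.2
  · intro a _ b _ h
    exact Subtype.ext h
  · intro w hw
    exact ⟨⟨w, hb_mem_F.mp hw⟩, Finset.mem_univ _, rfl⟩
  · intro a _
    rfl

lemma hb_transport {m n : ℕ} (φ : Hyp m ≃ Hyp n)
    (hφ : ∀ x y : Hyp m,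
      (StepArrow x.1 y.1 ↔ StepArrow (φ x).1 (φ y).1) ∧
      (StepDouble x.1 y.1 ↔ StepDouble (φ x).1 (φ y).1)) :
    ∃ t : ℕ, m + 1 = 2 ^ t * (n + 1) ∨ n + 1 = 2 ^ t * (m + 1) := by
  classical
  obtain ⟨c, hc⟩ := hb_offset φ hφ
  letI : Fintype (Hyp m) := (hb_finite m).fintype
  letI : Fintype (Hyp n) := (hb_finite n).fintype
  have hm : ∑ x : Hyp m, 2 ^ (x.1.count 1) = m + 1 := hb_sum_subtype m
  have hn : ∑ y : Hyp n, 2 ^ (y.1.count 1) = n + 1 := hb_sum_subtype n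
  have hcomp : ∑ x : Hyp m, 2 ^ ((φ x).1.count 1) = n + 1 := by
    rw [← hn]
    exact Fintype.sum_equiv φ _ _ (fun x => rfl)
  rcases le_or_gt 0 c with h0 | h0
  · refine ⟨c.toNat, Or.inr ?_⟩
    have key : ∀ x : Hyp m, (φ x).1.count 1 = x.1.count 1 + c.toNat := by
      intro x
      have := hc x
      omega
    calc n + 1 = ∑ x : Hyp m, 2 ^ ((φ x).1.count 1) := hcomp.symm
      _ = ∑ x : Hyp m, 2 ^ (x.1.count 1) * 2 ^ c.toNat := by
          apply Finset.sum_congr rfl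
          intro x _
          rw [key x, pow_add]
      _ = 2 ^ c.toNat * (m + 1) := by
          rw [← Finset.sum_mul, hm]
          ring
  · refine ⟨(-c).toNat, Or.inl ?_⟩
    have key : ∀ x : Hyp m, x.1.count 1 = (φ x).1.count 1 + (-c).toNat := by
      intro x
      have := hc x
      omega
    calc m + 1 = ∑ x : Hyp m, 2 ^ (x.1.count 1) := hm.symm
      _ = ∑ x : Hyp m, 2 ^ ((φ x).1.count 1) * 2 ^ (-c).toNat := by
          apply Finset.sum_congr rfl
          intro x _
          rw [key x, pow_add]
      _ = 2 ^ (-c).toNat * (n + 1) := by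
          rw [← Finset.sum_mul, hcomp]
          ring
lemma hb_arrow_append1 (a b : List ℕ) :
    StepArrow (a ++ [1]) (b ++ [1]) ↔ StepArrow a b := by
  constructor
  · rintro (⟨x, y, h1, h2⟩ | ⟨y, h1, h2⟩)
    · rcases hb_concat_cases y with rfl | ⟨u, d, rfl⟩
      · have h1' : a ++ [1] = (x ++ [0]) ++ [2] := by simpa using h1
        have := (List.append_inj' h1' rfl).2
        simp at this
      · have h1' : a ++ [1] = (x ++ 0 :: 2 :: u) ++ [d] := by simpa using h1
        have h2' : b ++ [1] = (x ++ 1 :: 0 :: u) ++ [d] := by simpa using h2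
        obtain ⟨ha, hd⟩ := List.append_inj' h1' rfl
        obtain ⟨hb, _⟩ := List.append_inj' h2' rfl
        exact Or.inl ⟨x, u, ha, hb⟩
    · cases a with
      | nil => simp at h1
      | cons a0 as =>
          simp only [List.cons_append, List.cons.injEq] at h1
          obtain ⟨rfl, hy⟩ := h1
          have h2' : b ++ [1] = (1 :: 0 :: as) ++ [1] := by
            rw [h2, ← hy]
            simp
          have hb : b = 1 :: 0 :: as := (List.append_inj' h2' rfl).1
          exact Or.inr ⟨as, rfl, hb⟩
  · rintro (⟨x, y, rfl, rfl⟩ | ⟨y, rfl, rfl⟩)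
    · exact Or.inl ⟨x, y ++ [1], by simp, by simp⟩
    · exact Or.inr ⟨y ++ [1], by simp, by simp⟩

lemma hb_double_append1 (a b : List ℕ) :
    StepDouble (a ++ [1]) (b ++ [1]) ↔ StepDouble a b := by
  constructor
  · rintro ⟨x, y, h1, h2⟩
    rcases hb_concat_cases y with rfl | ⟨u, d, rfl⟩
    · have h1' : a ++ [1] = (x ++ [1]) ++ [2] := by simpa using h1
      have := (List.append_inj' h1' rfl).2
      simp at this
    · have h1' : a ++ [1] = (x ++ 1 :: 2 :: u) ++ [d] := by simpa using h1
      have h2' : b ++ [1] = (x ++ 2 :: 0 :: u) ++ [d] := by simpa using h2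
      obtain ⟨ha, hd⟩ := List.append_inj' h1' rfl
      obtain ⟨hb, _⟩ := List.append_inj' h2' rfl
      exact ⟨x, u, ha, hb⟩
  · rintro ⟨x, y, rfl, rfl⟩
    exact ⟨x, y ++ [1], by simp, by simp⟩

def HbIso (m n : ℕ) : Prop :=
  ∃ φ : Hyp m ≃ Hyp n,
    ∀ x y : Hyp m,
      (StepArrow x.1 y.1 ↔ StepArrow (φ x).1 (φ y).1) ∧
      (StepDouble x.1 y.1 ↔ StepDouble (φ x).1 (φ y).1)

lemma hbIso_refl (m : ℕ) : HbIso m m :=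
  ⟨Equiv.refl _, fun x y => ⟨Iff.rfl, Iff.rfl⟩⟩

lemma hbIso_symm {m n : ℕ} (h : HbIso m n) : HbIso n m := by
  obtain ⟨φ, hφ⟩ := h
  refine ⟨φ.symm, fun x y => ?_⟩
  have := hφ (φ.symm x) (φ.symm y)
  simp only [Equiv.apply_symm_apply] at this
  exact ⟨this.1.symm, this.2.symm⟩

lemma hbIso_trans {m n p : ℕ} (h1 : HbIso m n) (h2 : HbIso n p) : HbIso m p := by
  obtain ⟨φ, hφ⟩ := h1
  obtain ⟨ψ, hψ⟩ := h2
  refine ⟨φ.trans ψ, fun x y => ?_⟩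
  have ha := hφ x y
  have hb := hψ (φ x) (φ y)
  exact ⟨ha.1.trans hb.1, ha.2.trans hb.2⟩

lemma hbIso_double (k : ℕ) : HbIso k (2 * k + 1) := by
  have hmem : ∀ x : Hyp k, x.1 ++ [1] ∈ Hyp (2 * k + 1) := by
    intro x
    exact hb_append_mem x.2 (by norm_num) (Or.inr one_ne_zero)
  have hbij : Function.Bijective (fun x : Hyp k => (⟨x.1 ++ [1], hmem x⟩ : Hyp (2 * k + 1))) := by
    constructor
    · intro a b h
      apply Subtype.ext
      have := congrArg Subtype.val h
      exact hb_app_inj 1 this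
    · intro y
      have hy : y.1 ∈ (fun w => w ++ [1]) '' Hyp k := by
        rw [← hb_hyp_odd k]
        exact y.2
      obtain ⟨u, hu, he⟩ := hy
      exact ⟨⟨u, hu⟩, Subtype.ext he⟩
  refine ⟨Equiv.ofBijective _ hbij, fun x y => ?_⟩
  constructor
  · exact (hb_arrow_append1 x.1 y.1).symm
  · exact (hb_double_append1 x.1 y.1).symm

lemma hbIso_pow (n t : ℕ) : HbIso n (2 ^ t * (n + 1) - 1) := by
  induction t with
  | zero => simpa using hbIso_refl n
  | succ t ih =>
      have h := hbIso_trans ih (hbIso_double (2 ^ t * (n + 1) - 1))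
      have hA : 0 < 2 ^ t * (n + 1) := by positivity
      have hq : (2 : ℕ) ^ (t + 1) * (n + 1) = 2 * (2 ^ t * (n + 1)) := by ring
      have harith : 2 * (2 ^ t * (n + 1) - 1) + 1 = 2 ^ (t + 1) * (n + 1) - 1 := by
        omega
      rwa [harith] at h
lemma hb_final (m n : ℕ) :
    HbIso m n ↔ ∃ t : ℕ, m = 2 ^ t * n + 2 ^ t - 1 ∨ n = 2 ^ t * m + 2 ^ t - 1 := by
  constructor
  · intro h
    obtain ⟨φ, hφ⟩ := h
    obtain ⟨t, ht | ht⟩ := hb_transport φ hφ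
    · refine ⟨t, Or.inl ?_⟩
      have : 2 ^ t * (n + 1) = 2 ^ t * n + 2 ^ t := by ring
      omega
    · refine ⟨t, Or.inr ?_⟩
      have : 2 ^ t * (m + 1) = 2 ^ t * m + 2 ^ t := by ring
      omega
  · rintro ⟨t, ht | ht⟩
    · have hpow : (0 : ℕ) < 2 ^ t := by positivity
      have hm : m = 2 ^ t * (n + 1) - 1 := by
        have : 2 ^ t * (n + 1) = 2 ^ t * n + 2 ^ t := by ring
        omega
      subst hm
      exact hbIso_symm (hbIso_pow n t)
    · have hpow : (0 : ℕ) < 2 ^ t := by positivity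
      have hn : n = 2 ^ t * (m + 1) - 1 := by
        have : 2 ^ t * (m + 1) = 2 ^ t * m + 2 ^ t := by ring
        omega
      subst hn
      exact hbIso_pow m t


/-- `A(m)` and `A(n)` are isomorphic as edge-labeled directed graphs if and only if
`m = 2^t·n + 2^t − 1` or `n = 2^t·m + 2^t − 1` for some nonnegative integer `t`. -/
theorem iso_iff (m n : ℕ) :
    (∃ φ : Hyp m ≃ Hyp n,
      ∀ x y : Hyp m,
        (StepArrow x.1 y.1 ↔ StepArrow (φ x).1 (φ y).1) ∧
        (StepDouble x.1 y.1 ↔ StepDouble (φ x).1 (φ y).1)) ↔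
      ∃ t : ℕ, m = 2 ^ t * n + 2 ^ t - 1 ∨ n = 2 ^ t * m + 2 ^ t - 1 :=
  hb_final m n
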